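/- Let S ≥ 1 and T ≥ S + 1 be integers, q ≠ 0, Δ(ρ) = ρ^{2S} − 2mρ^S + q². The determinant of the 2×2 matrix g with entries g_{ττ} = −Δρ^{2T−2S}, g_{τρ} = g_{ρτ} = −TΔτρ^{2T−2S−1}, g_{ρρ} = S²ρ^{4S−2}/Δ − T²Δτ²ρ^{2T−2S−2} equals −S²ρ^{2T+2S−2}. In particular, det g = 0 exactly when ρ = 0, so the extended metric is degenerate precisely on the hypersurface ρ = 0. -/

import Mathlib

/-!
Expanding the 2×2 determinant, the two terms `T²Δ²τ²ρ^{2(2T-2S-1)}` coming from `g_{ττ} g_{ρρ}`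
and from `g_{τρ}²` cancel, and `Δ` cancels in the remaining product `-Δρ^{2T-2S} · S²ρ^{4S-2}/Δ`.
-/

/-- The metric `g` in the coordinates `(τ, ρ)`, with `Δ` treated as an independent quantity. -/
def extendedMetric {K : Type*} [Field K] (S T : ℕ) (τ ρ Δ : K) : Matrix (Fin 2) (Fin 2) K :=
  !![-(Δ * ρ ^ (2 * T - 2 * S)), -((T : K) * Δ * τ * ρ ^ (2 * T - 2 * S - 1));
     -((T : K) * Δ * τ * ρ ^ (2 * T - 2 * S - 1)),
     (S : K) ^ 2 * ρ ^ (4 * S - 2) / Δ - (T : K) ^ 2 * Δ * τ ^ 2 * ρ ^ (2 * T - 2 * S - 2)]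

section

variable {K : Type*} [Field K] {S T : ℕ} {τ ρ Δ : K}

theorem extendedMetric_det (hS : 1 ≤ S) (hT : S + 1 ≤ T) (hΔ : Δ ≠ 0) :
    (extendedMetric S T τ ρ Δ).det = -(S : K) ^ 2 * ρ ^ (2 * T + 2 * S - 2) := by
  obtain ⟨a, ha⟩ : ∃ a, 2 * T - 2 * S = a + 2 := ⟨2 * T - 2 * S - 2, by omega⟩
  have ha₁ : 2 * T - 2 * S - 1 = a + 1 := by omega
  have ha₂ : 2 * T - 2 * S - 2 = a := by omega
  have hsum : 2 * T + 2 * S - 2 = a + (4 * S - 2) + 2 := by omega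
  rw [extendedMetric, Matrix.det_fin_two_of, ha₁, ha₂, ha, hsum]
  field_simp
  ring

theorem extendedMetric_det_eq_zero_iff [CharZero K] (hS : 1 ≤ S) (hT : S + 1 ≤ T) (hΔ : Δ ≠ 0) :
    (extendedMetric S T τ ρ Δ).det = 0 ↔ ρ = 0 := by
  have hS₀ : (S : K) ≠ 0 := Nat.cast_ne_zero.mpr (by omega)
  rw [extendedMetric_det hS hT hΔ, mul_eq_zero, pow_eq_zero_iff (by omega)]
  simp [hS₀]

end

theorem stmt_8_general (S T : ℕ) (hS : 1 ≤ S) (hT : S + 1 ≤ T)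
    (τ ρ Δ : ℝ) (hΔ : Δ ≠ 0) :
    Matrix.det
      !![-(Δ * ρ ^ (2 * T - 2 * S)), -((T : ℝ) * Δ * τ * ρ ^ (2 * T - 2 * S - 1));
         -((T : ℝ) * Δ * τ * ρ ^ (2 * T - 2 * S - 1)),
         (S : ℝ) ^ 2 * ρ ^ (4 * S - 2) / Δ -
           (T : ℝ) ^ 2 * Δ * τ ^ 2 * ρ ^ (2 * T - 2 * S - 2)] =
      -(S : ℝ) ^ 2 * ρ ^ (2 * T + 2 * S - 2) ∧
    (Matrix.det
      !![-(Δ * ρ ^ (2 * T - 2 * S)), -((T : ℝ) * Δ * τ * ρ ^ (2 * T - 2 * S - 1));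
         -((T : ℝ) * Δ * τ * ρ ^ (2 * T - 2 * S - 1)),
         (S : ℝ) ^ 2 * ρ ^ (4 * S - 2) / Δ -
           (T : ℝ) ^ 2 * Δ * τ ^ 2 * ρ ^ (2 * T - 2 * S - 2)] = 0 ↔ ρ = 0) :=
  ⟨extendedMetric_det hS hT hΔ, extendedMetric_det_eq_zero_iff hS hT hΔ⟩

/-- For integers `S ≥ 1`, `T ≥ S + 1`, `q ≠ 0`, `Δ(ρ) = ρ^{2S} − 2mρ^S + q² ≠ 0`,
the determinant of the extended metric matrix equals `−S²ρ^{2T+2S−2}`; in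
particular it vanishes exactly when `ρ = 0` (the metric is degenerate precisely
on the hypersurface `ρ = 0`). -/
theorem stmt_8 (m q : ℝ) (hq : q ≠ 0) (S T : ℕ) (hS : 1 ≤ S) (hT : S + 1 ≤ T)
    (τ ρ Δ : ℝ) (hΔdef : Δ = ρ ^ (2 * S) - 2 * m * ρ ^ S + q ^ 2) (hΔ : Δ ≠ 0) :
    Matrix.det
      !![-(Δ * ρ ^ (2 * T - 2 * S)), -((T : ℝ) * Δ * τ * ρ ^ (2 * T - 2 * S - 1));
         -((T : ℝ) * Δ * τ * ρ ^ (2 * T - 2 * S - 1)),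
         (S : ℝ) ^ 2 * ρ ^ (4 * S - 2) / Δ -
           (T : ℝ) ^ 2 * Δ * τ ^ 2 * ρ ^ (2 * T - 2 * S - 2)] =
      -(S : ℝ) ^ 2 * ρ ^ (2 * T + 2 * S - 2) ∧
    (Matrix.det
      !![-(Δ * ρ ^ (2 * T - 2 * S)), -((T : ℝ) * Δ * τ * ρ ^ (2 * T - 2 * S - 1));
         -((T : ℝ) * Δ * τ * ρ ^ (2 * T - 2 * S - 1)),
         (S : ℝ) ^ 2 * ρ ^ (4 * S - 2) / Δ -
           (T : ℝ) ^ 2 * Δ * τ ^ 2 * ρ ^ (2 * T - 2 * S - 2)] = 0 ↔ ρ = 0) :=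
  stmt_8_general S T hS hT τ ρ Δ hΔ
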